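/- arXiv:1512.04804 — 2 statements merged into one kernel-verified Lean document; each statement's English description precedes it below -/
import Mathlib

section
/- Let A be a unital ℚ(r,q)-algebra with invertible element T and element E satisfying the BMW relations T - T^{-1} = (q - q^{-1})(1 - E), E² = xE with x = 1 + (r - r^{-1})/(q - q^{-1}), and ET = TE = r^{-1}E. Define, for k ∈ ℕ, Y(k) := (-1/[k+1])·([k]·T - q^k + ((q^k - q^{-k})/(1 + r·q^{-2k+1}))·E), where [n] is the quantum integer. Then T·Y(1) = -q^{-1}·Y(1) and E·Y(1) = 0. -/
noncomputable section

/-- The field ℚ(r,q) of rational functions in two indeterminates over ℚ. -/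
abbrev Krq : Type := RatFunc (RatFunc ℚ)

/-- The indeterminate q. -/
def q : Krq := RatFunc.C RatFunc.X

/-- The indeterminate r. -/
def r : Krq := RatFunc.X

/-- The BMW parameter x = 1 + (r - r⁻¹)/(q - q⁻¹). -/
def x : Krq := 1 + (r - r⁻¹) / (q - q⁻¹)

/-- The quantum integer [n] = (q^n - q^{-n})/(q - q⁻¹) in ℚ(r,q). -/
def qint (n : ℕ) : Krq := (q ^ n - q⁻¹ ^ n) / (q - q⁻¹)

/-- The Yang–Baxter element
Y(k) = (-1/[k+1])·([k]·T - q^k + ((q^k - q^{-k})/(1 + r·q^{-2k+1}))·E). -/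
def Ybx {A : Type*} [Ring A] [Algebra Krq A] (T E : A) (k : ℕ) : A :=
  (-(qint (k + 1))⁻¹) •
    ((qint k) • T - (q ^ k) • (1 : A)
      + ((q ^ k - q⁻¹ ^ k) / (1 + r * q ^ ((1 : ℤ) - 2 * k))) • E)

/-!
Up to the scalar `-1/[2]`, `Y(1)` is `Y = T - q + c E` with `c = (q - q⁻¹)/(1 + r q⁻¹)`.
Multiplying the quadratic relation by `T` gives `T² = 1 + (q - q⁻¹) T - (q - q⁻¹) r⁻¹ E`, so
`T Y = 1 - q⁻¹ T + (c - q + q⁻¹) r⁻¹ E`, which is `-q⁻¹ Y` exactly because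
`c (1 + r q⁻¹) = q - q⁻¹`; and `E Y = (r⁻¹ - q + c x) E` vanishes because `c x = q - r⁻¹`.
The only facts about `ℚ(r,q)` needed are `q, r ≠ 0`, `q² ≠ 1` and `r ≠ -q`, which hold because an
indeterminate is transcendental over the constants.
-/

theorem RatFunc.X_pow_ne_C {K : Type*} [Field K] {n : ℕ} (hn : 0 < n) (c : K) :
    (RatFunc.X : RatFunc K) ^ n ≠ RatFunc.C c := fun h =>
  RatFunc.transcendental_X.pow hn <| h ▸ RatFunc.algebraMap_eq_C (K := K) ▸
    isAlgebraic_algebraMap c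

section BMW

variable {K A : Type*} [Field K] [Ring A] [Algebra K A] {q r c : K} {T Tinv E : A}

theorem bmw_T_mul_self (hTl : T * Tinv = 1) (hquad : T - Tinv = (q - q⁻¹) • (1 - E))
    (hTE : T * E = r⁻¹ • E) : T * T = 1 + (q - q⁻¹) • T - ((q - q⁻¹) * r⁻¹) • E := by
  calc T * T = T * Tinv + T * (T - Tinv) := by noncomm_ring
    _ = _ := by rw [hTl, hquad, mul_smul_comm, mul_sub, mul_one, hTE]; module

theorem bmw_T_mul_eq_neg_inv_smul (hq : q ≠ 0) (hr : r ≠ 0) (hc : c * (1 + r * q⁻¹) = q - q⁻¹)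
    (hTl : T * Tinv = 1) (hquad : T - Tinv = (q - q⁻¹) • (1 - E)) (hTE : T * E = r⁻¹ • E) :
    T * (T - q • 1 + c • E) = (-q⁻¹) • (T - q • 1 + c • E) := by
  rw [mul_add, mul_sub, mul_smul_comm, mul_smul_comm, mul_one, hTE, bmw_T_mul_self hTl hquad hTE]
  match_scalars
  · field_simp
  · ring
  · rw [← hc]; field_simp; ring

theorem bmw_E_mul_eq_zero (hq : q ≠ 0) (hr : r ≠ 0) (hqq : q - q⁻¹ ≠ 0)
    (hc : c * (1 + r * q⁻¹) = q - q⁻¹) (hE2 : E * E = (1 + (r - r⁻¹) / (q - q⁻¹)) • E)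
    (hET : E * T = r⁻¹ • E) : E * (T - q • 1 + c • E) = 0 := by
  have hx : (1 + (r - r⁻¹) / (q - q⁻¹)) * (q - q⁻¹) = (1 + r * q⁻¹) * (q - r⁻¹) := by
    rw [add_mul, one_mul, div_mul_cancel₀ _ hqq]
    field_simp
    ring
  have hcx : c * (1 + (r - r⁻¹) / (q - q⁻¹)) = q - r⁻¹ :=
    mul_right_cancel₀ hqq (by linear_combination c * hx + (q - r⁻¹) * hc)
  rw [mul_add, mul_sub, mul_smul_comm, mul_smul_comm, mul_one, hET, hE2]
  match_scalars
  linear_combination hcx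

end BMW

theorem q_ne_zero : q ≠ 0 := (map_ne_zero RatFunc.C).mpr RatFunc.X_ne_zero

theorem r_ne_zero : r ≠ 0 := RatFunc.X_ne_zero

theorem q_sub_q_inv_ne_zero : q - q⁻¹ ≠ 0 := by
  have hq2 : q ^ 2 ≠ 1 := by
    rw [q, ← map_pow, ← map_one RatFunc.C, RatFunc.C_injective.ne_iff]
    simpa using RatFunc.X_pow_ne_C (K := ℚ) two_pos 1
  rw [sub_ne_zero, ne_eq, ← mul_left_inj' q_ne_zero, inv_mul_cancel₀ q_ne_zero, ← sq]
  exact hq2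

theorem one_add_r_mul_q_inv_ne_zero : 1 + r * q⁻¹ ≠ 0 := by
  have hqr : q + r ≠ 0 := by
    rw [ne_eq, add_eq_zero_iff_neg_eq, q, r, ← map_neg, eq_comm, ← pow_one RatFunc.X]
    exact RatFunc.X_pow_ne_C one_pos _
  rwa [← mul_ne_zero_iff_right q_ne_zero, add_mul, one_mul, inv_mul_cancel_right₀ q_ne_zero]

theorem Ybx_one {A : Type*} [Ring A] [Algebra Krq A] (T E : A) :
    Ybx T E 1 = (-(qint 2)⁻¹) • (T - q • 1 + ((q - q⁻¹) / (1 + r * q⁻¹)) • E) := by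
  have hqint : qint 1 = 1 := by rw [qint, pow_one, pow_one, div_self q_sub_q_inv_ne_zero]
  simp [Ybx, hqint]

theorem yang_baxter_eigenvalues_general {A : Type*} [Ring A] [Algebra Krq A]
    (T Tinv E : A) (hTl : T * Tinv = 1)
    (hquad : T - Tinv = (q - q⁻¹) • ((1 : A) - E))
    (hE2 : E * E = x • E)
    (hET : E * T = r⁻¹ • E) (hTE : T * E = r⁻¹ • E) :
    T * Ybx T E 1 = (-q⁻¹) • Ybx T E 1 ∧ E * Ybx T E 1 = 0 := by
  have hc : (q - q⁻¹) / (1 + r * q⁻¹) * (1 + r * q⁻¹) = q - q⁻¹ :=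
    div_mul_cancel₀ _ one_add_r_mul_q_inv_ne_zero
  rw [Ybx_one, mul_smul_comm, mul_smul_comm, smul_comm (-q⁻¹),
    bmw_T_mul_eq_neg_inv_smul q_ne_zero r_ne_zero hc hTl hquad hTE,
    bmw_E_mul_eq_zero q_ne_zero r_ne_zero q_sub_q_inv_ne_zero hc hE2 hET, smul_zero]
  exact ⟨rfl, rfl⟩

/-- If T (invertible) and E satisfy the single-index BMW relations, then
T·Y(1) = -q⁻¹·Y(1) and E·Y(1) = 0. -/
theorem yang_baxter_eigenvalues {A : Type*} [Ring A] [Algebra Krq A]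
    (T Tinv E : A) (hTl : T * Tinv = 1) (hTr : Tinv * T = 1)
    (hquad : T - Tinv = (q - q⁻¹) • ((1 : A) - E))
    (hE2 : E * E = x • E)
    (hET : E * T = r⁻¹ • E) (hTE : T * E = r⁻¹ • E) :
    T * Ybx T E 1 = (-q⁻¹) • Ybx T E 1 ∧ E * Ybx T E 1 = 0 :=
  yang_baxter_eigenvalues_general T Tinv E hTl hquad hE2 hET hTE
end
end

section
/- Let A be a unital ℚ(r,q)-algebra with invertible T and E satisfying T - T^{-1} = (q - q^{-1})(1 - E), E² = xE where x = 1 + (r - r^{-1})/(q - q^{-1}), and ET = TE = r^{-1}E. Define Y(1) := (-1/[2])·(T - q + ((q - q^{-1})/(1 + r·q^{-1}))·E). Then Y(1) is idempotent: Y(1)² = Y(1). -/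
noncomputable section

/-- The quantum integer [2] = q + q⁻¹, as (q² - q⁻²)/(q - q⁻¹). -/
def qtwo : Krq := (q ^ 2 - q⁻¹ ^ 2) / (q - q⁻¹)

/-- Y(1) = (-1/[2])·(T - q + ((q - q⁻¹)/(1 + r·q⁻¹))·E). -/
def Yone {A : Type*} [Ring A] [Algebra Krq A] (T E : A) : A :=
  (-qtwo⁻¹) • (T - q • (1 : A) + ((q - q⁻¹) / (1 + r * q⁻¹)) • E)


/-!
Multiplying the skein relation `T - T⁻¹ = (q - q⁻¹)(1 - E)` by `T` gives the quadratic relation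
`(T - q)(T + q⁻¹) = -(q - q⁻¹) r⁻¹ E`, and `E` absorbs `T` as the scalar `r⁻¹`. Hence
`Z = T - q + u E` satisfies `Z² = -[2] Z + κ(u) E` for a scalar `κ(u)` quadratic in `u`, and
`u = (q - q⁻¹)/(1 + r q⁻¹)` is a root of `κ`. So `Z² = -[2] Z`, and `Y(1) = (-[2])⁻¹ Z` is idempotent.
-/

theorem RatFunc.X_ne_C {K : Type*} [Field K] (c : K) : (RatFunc.X : RatFunc K) ≠ RatFunc.C c :=
  fun h => by simpa using congrArg RatFunc.intDegree h

theorem RatFunc.X_sq_ne_one {K : Type*} [Field K] : (RatFunc.X : RatFunc K) ^ 2 ≠ 1 :=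
  fun h => by
    simpa [sq, RatFunc.intDegree_mul RatFunc.X_ne_zero RatFunc.X_ne_zero] using
      congrArg RatFunc.intDegree h

theorem isIdempotentElem_inv_smul_of_mul_self_eq_smul {K A : Type*} [Field K] [Ring A]
    [Algebra K A] {Z : A} {μ : K} (hZ : Z * Z = μ • Z) : IsIdempotentElem (μ⁻¹ • Z) := by
  rw [IsIdempotentElem, smul_mul_smul_comm, hZ, smul_smul]
  congr 1
  simpa using mul_self_mul_inv μ⁻¹

section BMW

variable {K A : Type*} [Field K] [Ring A] [Algebra K A] {T Tinv E : A}

theorem sub_mul_add_eq_smul_of_bmw {q c : K} (hq : q ≠ 0) (hTl : T * Tinv = 1)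
    (hquad : T - Tinv = (q - q⁻¹) • (1 - E)) (hTE : T * E = c • E) :
    (T - q • 1) * (T + q⁻¹ • 1) = -((q - q⁻¹) * c) • E := by
  obtain rfl : Tinv = T - (q - q⁻¹) • (1 - E) := by rw [← hquad, sub_sub_cancel]
  have hT2 : T * T = 1 + (q - q⁻¹) • T - ((q - q⁻¹) * c) • E := by
    rw [← hTl]
    simp only [mul_sub, mul_smul_comm, mul_one, hTE, smul_sub, smul_smul]
    abel
  simp only [mul_add, sub_mul, smul_mul_assoc, mul_smul_comm, one_mul, mul_one, hT2]
  match_scalars <;> field_simp <;> ring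

theorem mul_self_eq_smul_of_quadratic {a b c γ u x : K}
    (hquad : (T - a • 1) * (T + b • 1) = γ • E) (hTE : T * E = c • E) (hET : E * T = c • E)
    (hE2 : E * E = x • E) (hu : γ + 2 * u * (c - a) + u ^ 2 * x = -(a + b) * u) :
    (T - a • 1 + u • E) * (T - a • 1 + u • E) = (-(a + b)) • (T - a • 1 + u • E) := by
  have hT2 : T * T = γ • E + (a - b) • T + (a * b) • 1 := by
    rw [← hquad]
    simp only [mul_add, sub_mul, smul_mul_assoc, mul_smul_comm, one_mul, mul_one]
    module
  simp only [mul_add, add_mul, mul_sub, sub_mul, smul_mul_assoc, mul_smul_comm, one_mul, mul_one,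
    smul_smul, hT2, hTE, hET, hE2]
  match_scalars
  · linear_combination hu
  · ring
  · ring

end BMW

theorem bmw_coeff_identity {K : Type*} [Field K] {q r : K} (hq : q ≠ 0) (hr : r ≠ 0)
    (hq2 : q ^ 2 ≠ 1) (hqr : q + r ≠ 0) :
    -((q - q⁻¹) * r⁻¹) + 2 * ((q - q⁻¹) / (1 + r * q⁻¹)) * (r⁻¹ - q)
      + ((q - q⁻¹) / (1 + r * q⁻¹)) ^ 2 * (1 + (r - r⁻¹) / (q - q⁻¹))
      = -(q + q⁻¹) * ((q - q⁻¹) / (1 + r * q⁻¹)) := by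
  have hq2' : q ^ 2 - 1 ≠ 0 := sub_ne_zero.mpr hq2
  field_simp
  ring

theorem q_sq_ne_one : q ^ 2 ≠ 1 := fun h =>
  RatFunc.X_sq_ne_one (RatFunc.C_injective (K := RatFunc ℚ) (by rw [map_pow, map_one]; exact h))

theorem q_add_r_ne_zero : q + r ≠ 0 := fun h =>
  RatFunc.X_ne_C (K := RatFunc ℚ) (-RatFunc.X)
    (by rw [map_neg]; exact eq_neg_of_add_eq_zero_right h)

theorem qtwo_eq : qtwo = q + q⁻¹ := by
  have hd : q - q⁻¹ ≠ 0 := by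
    rw [sub_ne_zero]
    intro h
    apply q_sq_ne_one
    rw [sq]
    nth_rw 2 [h]
    exact mul_inv_cancel₀ q_ne_zero
  rw [qtwo, div_eq_iff hd]
  ring

theorem yang_baxter_idempotent_general {A : Type*} [Ring A] [Algebra Krq A]
    (T Tinv E : A) (hTl : T * Tinv = 1)
    (hquad : T - Tinv = (q - q⁻¹) • ((1 : A) - E))
    (hE2 : E * E = x • E)
    (hET : E * T = r⁻¹ • E) (hTE : T * E = r⁻¹ • E) :
    Yone T E * Yone T E = Yone T E := by
  have hZ := mul_self_eq_smul_of_quadratic (sub_mul_add_eq_smul_of_bmw q_ne_zero hTl hquad hTE)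
    hTE hET hE2 (bmw_coeff_identity q_ne_zero r_ne_zero q_sq_ne_one q_add_r_ne_zero)
  rw [Yone, neg_inv, qtwo_eq]
  exact isIdempotentElem_inv_smul_of_mul_self_eq_smul hZ

/-- If T (invertible) and E satisfy the single-index BMW relations, then Y(1)
is idempotent. -/
theorem yang_baxter_idempotent {A : Type*} [Ring A] [Algebra Krq A]
    (T Tinv E : A) (hTl : T * Tinv = 1) (hTr : Tinv * T = 1)
    (hquad : T - Tinv = (q - q⁻¹) • ((1 : A) - E))
    (hE2 : E * E = x • E)
    (hET : E * T = r⁻¹ • E) (hTE : T * E = r⁻¹ • E) :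
    Yone T E * Yone T E = Yone T E :=
  yang_baxter_idempotent_general T Tinv E hTl hquad hE2 hET hTE
end
end
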